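/- For any partition λ, the K-standardization map Φ restricts to a bijection from the set QYGen(λ) of quasiYamanouchi genomic tableaux of shape λ onto the set Inc_gl(λ) of gapless increasing tableaux of shape λ. -/

import Mathlib

open scoped Classical

/-- The cell `x = (row, column)` (0-indexed, English orientation) lies in the Young diagram
whose `r`-th row has length `lam r`. -/
def InShape (lam : ℕ → ℕ) (x : ℕ × ℕ) : Prop := x.2 < lam x.1

/-- `lam : ℕ → ℕ` is the row-length function of a partition: weakly decreasing and
eventually zero. -/
def IsPartitionFn (lam : ℕ → ℕ) : Prop := Antitone lam ∧ ∃ N, ∀ n, N ≤ n → lam n = 0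

/-- A genomic tableau of shape `lam`: a semistandard filling (positive entries, rows weakly
increasing left-to-right, columns strictly increasing top-to-bottom) together with, for each
`i`, a partition of the boxes labeled `i` into genes, encoded by the relation `sameGene`.
Boxes in a common gene share their entry; if a gene has boxes (necessarily with a common
entry) in columns `c₁ < c₃`, then every box with the same entry in an intervening column
belongs to the same gene; and no gene has two boxes in a common row.  Entries and the
relation are normalized (to `0`, resp. `False`) outside the shape so that equality of
structures agrees with equality of tableaux. -/
structure GenomicTableau (lam : ℕ → ℕ) where
  entry : ℕ × ℕ → ℕ
  sameGene : ℕ × ℕ → ℕ × ℕ → Prop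
  entry_pos : ∀ x, InShape lam x → 0 < entry x
  entry_zero : ∀ x, ¬ InShape lam x → entry x = 0
  row_weak : ∀ r c₁ c₂, c₁ ≤ c₂ → InShape lam (r, c₂) → entry (r, c₁) ≤ entry (r, c₂)
  col_strict : ∀ r₁ r₂ c, r₁ < r₂ → InShape lam (r₂, c) → entry (r₁, c) < entry (r₂, c)
  sameGene_mem : ∀ x y, sameGene x y → InShape lam x ∧ InShape lam y
  sameGene_refl : ∀ x, InShape lam x → sameGene x x
  sameGene_symm : ∀ x y, sameGene x y → sameGene y x
  sameGene_trans : ∀ x y z, sameGene x y → sameGene y z → sameGene x z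
  sameGene_entry : ∀ x y, sameGene x y → entry x = entry y
  sameGene_interval : ∀ x y z, sameGene x z → InShape lam y → entry y = entry x →
    x.2 < y.2 → y.2 < z.2 → sameGene x y
  sameGene_row : ∀ x y, sameGene x y → x.1 = y.1 → x = y

/-- `x` is the leftmost box of its gene in the genomic tableau `T`. -/
def IsGeneLeader {lam : ℕ → ℕ} (T : GenomicTableau lam) (x : ℕ × ℕ) : Prop :=
  InShape lam x ∧ ∀ y, T.sameGene x y → x.2 ≤ y.2

/-- The number of `(n+1)`-genes of `T` (counted via their leftmost boxes).  Thus `wt T` is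
the weight of `T` as a weak composition indexed from `0`: the variable `x_n` records
`(n+1)`-genes. -/
noncomputable def wt {lam : ℕ → ℕ} (T : GenomicTableau lam) (n : ℕ) : ℕ :=
  {x | IsGeneLeader T x ∧ T.entry x = n + 1}.ncard

/-- The largest entry of the genomic tableau `T`. -/
noncomputable def maxEntry {lam : ℕ → ℕ} (T : GenomicTableau lam) : ℕ :=
  sSup {n | ∃ x, InShape lam x ∧ T.entry x = n}

/-- The positive part of the weight of `T`: the list of nonzero components of `wt T`,
in order. -/
noncomputable def wtPos {lam : ℕ → ℕ} (T : GenomicTableau lam) : List ℕ :=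
  ((List.range (maxEntry T)).map (wt T)).filter (fun e => decide (0 < e))

/-- The (strong) composition `β` refines `α` if `α` is obtained from `β` by summing
consecutive blocks. -/
def Refines (β α : List ℕ) : Prop :=
  ∃ L : List (List ℕ), L.flatten = β ∧ L.map List.sum = α

/-- The positive part of a weak composition `m`: the list of its nonzero values in order of
the index. -/
noncomputable def posPart (m : ℕ →₀ ℕ) : List ℕ :=
  (m.support.sort (· ≤ ·)).map (fun i => m i)

/-- The fundamental quasisymmetric function `F_α`, a power series in variables indexed
by `ℕ`: the sum of `x^m` over all weak compositions `m` whose positive part refines `α`. -/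
noncomputable def fundamentalF (α : List ℕ) : MvPowerSeries ℕ ℤ :=
  fun m : ℕ →₀ ℕ => if Refines (posPart m) α then 1 else 0

/-- The genomic Schur function `U_lam`: the coefficient of `x^m` is the number of genomic
tableaux of shape `lam` with weight `m`. -/
noncomputable def genomicSchur (lam : ℕ → ℕ) : MvPowerSeries ℕ ℤ :=
  fun m : ℕ →₀ ℕ => (Nat.card {T : GenomicTableau lam // ∀ n, wt T n = m n} : ℤ)

/-- A genomic tableau is quasiYamanouchi if for every `i > 1` appearing in it, some
instance of `i` is weakly west of some instance of `i-1`. -/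
def IsQY {lam : ℕ → ℕ} (T : GenomicTableau lam) : Prop :=
  ∀ i, 2 ≤ i → (∃ x, InShape lam x ∧ T.entry x = i) →
    ∃ x y, InShape lam x ∧ InShape lam y ∧
      T.entry x = i ∧ T.entry y = i - 1 ∧ x.2 ≤ y.2

/-- One step of the regularization algorithm: if `i ≥ 2` appears in `T` and every box
labeled `i` is strictly east of every box labeled `i-1`, replace every label `i` by `i-1`,
keeping the gene decomposition. -/
def RegStep {lam : ℕ → ℕ} (T T' : GenomicTableau lam) : Prop :=
  ∃ i, 2 ≤ i ∧ (∃ x, InShape lam x ∧ T.entry x = i) ∧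
    (∀ x y, InShape lam x → InShape lam y → T.entry x = i → T.entry y = i - 1 → y.2 < x.2) ∧
    (∀ x, T'.entry x = if T.entry x = i then i - 1 else T.entry x) ∧
    (∀ x y, T'.sameGene x y ↔ T.sameGene x y)

/-- An increasing tableau of shape `lam`: positive entries, strictly increasing along rows
and down columns, normalized to `0` outside the shape. -/
structure IncreasingTableau (lam : ℕ → ℕ) where
  entry : ℕ × ℕ → ℕ
  entry_pos : ∀ x, InShape lam x → 0 < entry x
  entry_zero : ∀ x, ¬ InShape lam x → entry x = 0
  row_strict : ∀ r c₁ c₂, c₁ < c₂ → InShape lam (r, c₂) → entry (r, c₁) < entry (r, c₂)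
  col_strict : ∀ r₁ r₂ c, r₁ < r₂ → InShape lam (r₂, c) → entry (r₁, c) < entry (r₂, c)

/-- The largest entry of the increasing tableau `T`. -/
noncomputable def maxEntryInc {lam : ℕ → ℕ} (T : IncreasingTableau lam) : ℕ :=
  sSup {n | ∃ x, InShape lam x ∧ T.entry x = n}

/-- An increasing tableau is gapless if its set of entries is `{1, …, n}` for some `n`. -/
def Gapless {lam : ℕ → ℕ} (T : IncreasingTableau lam) : Prop :=
  ∀ i, 0 < i → i ≤ maxEntryInc T → ∃ x, InShape lam x ∧ T.entry x = i

/-- `i` is a descent of the increasing tableau `T` if some instance of `i` lies in a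
strictly higher row than some instance of `i+1`. -/
def IsDescent {lam : ℕ → ℕ} (T : IncreasingTableau lam) (i : ℕ) : Prop :=
  ∃ x y, InShape lam x ∧ InShape lam y ∧ T.entry x = i ∧ T.entry y = i + 1 ∧ x.1 < y.1

/-- The descent composition of a gapless increasing tableau with entries `{1, …, n}`:
the lengths of the segments of the word `1 2 ⋯ n` cut after each descent. -/
noncomputable def descComp {lam : ℕ → ℕ} (T : IncreasingTableau lam) : List ℕ :=
  let n := maxEntryInc T
  let ds := (((Finset.range n).filter fun i => IsDescent T i).sort (· ≤ ·)) ++ [n]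
  (ds.zip (0 :: ds)).map fun p => p.1 - p.2

/-- A standard Young tableau, viewed as an increasing tableau: gapless with all entries
distinct (so the entries are `1, …, |lam|`, each exactly once). -/
def IsStandard {lam : ℕ → ℕ} (T : IncreasingTableau lam) : Prop :=
  Gapless T ∧ ∀ x y, InShape lam x → InShape lam y → T.entry x = T.entry y → x = y

/-- The column of the leftmost box of the gene of `x` in `T`. -/
noncomputable def leadCol {lam : ℕ → ℕ} (T : GenomicTableau lam) (x : ℕ × ℕ) : ℕ :=
  sInf {c | ∃ y, T.sameGene x y ∧ y.2 = c}

/-- K-standardization `Φ`: order the genes of `T` by listing the `1`-genes left to right,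
then the `2`-genes left to right, and so on; `kStd T x` is the (1-based) position of the
gene of `x` in this order (and `0` outside the shape). -/
noncomputable def kStd {lam : ℕ → ℕ} (T : GenomicTableau lam) (x : ℕ × ℕ) : ℕ :=
  if InShape lam x then
    {y | IsGeneLeader T y ∧ (T.entry y < T.entry x ∨
        (T.entry y = T.entry x ∧ y.2 ≤ leadCol T x))}.ncard
  else 0

/-- A semistandard tableau of shape `lam`, with positive entries, normalized to `0`
outside the shape. -/
structure SemistandardTableau (lam : ℕ → ℕ) where
  entry : ℕ × ℕ → ℕ
  entry_pos : ∀ x, InShape lam x → 0 < entry x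
  entry_zero : ∀ x, ¬ InShape lam x → entry x = 0
  row_weak : ∀ r c₁ c₂, c₁ ≤ c₂ → InShape lam (r, c₂) → entry (r, c₁) ≤ entry (r, c₂)
  col_strict : ∀ r₁ r₂ c, r₁ < r₂ → InShape lam (r₂, c) → entry (r₁, c) < entry (r₂, c)

/-- The number of boxes of `T` with entry `n+1` (matching the variable convention of
`wt`: the variable `x_n` records the entry `n+1`). -/
noncomputable def contentOf {lam : ℕ → ℕ} (T : SemistandardTableau lam) (n : ℕ) : ℕ :=
  {x | InShape lam x ∧ T.entry x = n + 1}.ncard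

/-- The Schur function `s_mu` as the generating function of semistandard tableaux of
shape `mu` by content. -/
noncomputable def schurFn (mu : ℕ → ℕ) : MvPowerSeries ℕ ℤ :=
  fun m : ℕ →₀ ℕ => (Nat.card {T : SemistandardTableau mu // ∀ n, contentOf T n = m n} : ℤ)

/-- The row-length function of the flag-shaped partition `(a, b, 1^k)`. -/
def flagShape (a b k : ℕ) : ℕ → ℕ :=
  fun r => if r = 0 then a else if r = 1 then b else if r < k + 2 then 1 else 0

/-- The homogeneous component of degree `d` of a power series. -/
noncomputable def homComponent (d : ℕ) (f : MvPowerSeries ℕ ℤ) : MvPowerSeries ℕ ℤ :=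
  fun m : ℕ →₀ ℕ => if (m.sum fun _ e => e) = d then MvPowerSeries.coeff m f else 0

/-- The complete homogeneous symmetric function `h_k` (`h_0 = 1`, and `h_k = 0` for
`k < 0`): the sum of all monomials of total degree `k`. -/
noncomputable def hSeries (k : ℤ) : MvPowerSeries ℕ ℤ :=
  fun m : ℕ →₀ ℕ => if ((m.sum fun _ e => e : ℕ) : ℤ) = k then 1 else 0

/-- The Schur function of an arbitrary (strong) composition `α`, via the Jacobi–Trudi
determinant `s_α = det(h_{α_i - i + j})`. -/
noncomputable def schurComp (α : List ℕ) : MvPowerSeries ℕ ℤ :=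
  Matrix.det (Matrix.of fun i j : Fin α.length =>
    hSeries ((α.get i : ℤ) - (i : ℕ) + (j : ℕ)))

/-- `e` lies in the `i`-th block (0-indexed) `M_{i+1}(α) = {α_1 + ⋯ + α_i + 1, …,
α_1 + ⋯ + α_{i+1}}` of the composition `α`. -/
def InBlock (α : List ℕ) (i : ℕ) (e : ℕ) : Prop :=
  (α.take i).sum < e ∧ e ≤ (α.take (i + 1)).sum

/-- The positive part of a weak composition of length `n`. -/
noncomputable def posPartFin {n : ℕ} (m : Fin n →₀ ℕ) : List ℕ :=
  (List.ofFn fun k : Fin n => m k).filter (fun e => decide (0 < e))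

/-- The fundamental quasisymmetric polynomial `F_α(x_1, …, x_n)` in `n` variables. -/
noncomputable def fundamentalFFin (n : ℕ) (α : List ℕ) : MvPowerSeries (Fin n) ℤ :=
  fun m : Fin n →₀ ℕ => if Refines (posPartFin m) α then 1 else 0

/-- The genomic Schur polynomial `U_lam(x_1, …, x_n)`: the generating function of genomic
tableaux with all entries at most `n`, by weight. -/
noncomputable def genomicSchurPoly (lam : ℕ → ℕ) (n : ℕ) : MvPowerSeries (Fin n) ℤ :=
  fun m : Fin n →₀ ℕ =>
    (Nat.card {T : GenomicTableau lam //
      (∀ x, InShape lam x → T.entry x ≤ n) ∧ ∀ k : Fin n, wt T (k : ℕ) = m k} : ℤ)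

/-!
Order the genes of a genomic tableau by entry, then by leftmost column: `kStd T` is the dense
ranking of the boxes by their genes in this order, hence a gapless increasing tableau.
Conversely, cut `1 2 ⋯ n` after each descent of a gapless increasing tableau `U`, replace every
entry by the number of its block and take the level sets of `U` as genes; this is a
quasiYamanouchi genomic tableau, and its K-standardization is `U` because two dense rankings
inducing the same strict order coincide. For a quasiYamanouchi `T`, the entries of consecutive
genes differ by one exactly at the descents of `kStd T`, so the construction recovers `T` from
`kStd T`.
-/
attribute [ext] GenomicTableau IncreasingTableau

section DenseRanking

variable {ι : Type*}

def IsDenseRanking (s : Set ι) (f : ι → ℕ) : Prop :=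
  ∀ x ∈ s, 1 ≤ f x ∧ (1 < f x → ∃ y ∈ s, f y + 1 = f x)

variable {s : Set ι} {f g : ι → ℕ} {x : ι}

lemma IsDenseRanking.exists_eq (hf : IsDenseRanking s f) (hx : x ∈ s) {i : ℕ} (hi : 1 ≤ i)
    (hix : i ≤ f x) : ∃ y ∈ s, f y = i := by
  induction hn : f x - i generalizing x with
  | zero => exact ⟨x, hx, by omega⟩
  | succ n ih =>
    obtain ⟨y, hy, hyx⟩ := (hf x hx).2 (by omega)
    exact ih hy (by omega) (by omega)

lemma IsDenseRanking.le_of_lt_imp_lt (hf : IsDenseRanking s f) (hg : ∀ x ∈ s, 1 ≤ g x)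
    (hfg : ∀ x ∈ s, ∀ y ∈ s, f x < f y → g x < g y) (hx : x ∈ s) : f x ≤ g x := by
  induction hn : f x using Nat.strong_induction_on generalizing x with
  | _ n ih =>
    rcases Nat.lt_or_ge 1 (f x) with h | h
    · obtain ⟨y, hy, hyx⟩ := (hf x hx).2 h
      have := ih (f y) (by omega) hy rfl
      have := hfg y hy x hx (by omega)
      omega
    · have := hg x hx
      omega

lemma IsDenseRanking.eqOn (hf : IsDenseRanking s f) (hg : IsDenseRanking s g)
    (hfg : ∀ x ∈ s, ∀ y ∈ s, f x < f y ↔ g x < g y) : Set.EqOn f g s := fun _ hx =>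
  le_antisymm
    (hf.le_of_lt_imp_lt (fun y hy => (hg y hy).1) (fun a ha b hb => (hfg a ha b hb).1) hx)
    (hg.le_of_lt_imp_lt (fun y hy => (hf y hy).1) (fun a ha b hb => (hfg a ha b hb).2) hx)

end DenseRanking

section RankIn

variable {α : Type*} [LinearOrder α] {S : Set α} {a b : α}

noncomputable def rankIn (S : Set α) (a : α) : ℕ := (S ∩ Set.Iic a).ncard

lemma rankIn_mono (hS : S.Finite) : Monotone (rankIn S) := fun _ _ h =>
  Set.ncard_le_ncard (Set.inter_subset_inter_right _ (Set.Iic_subset_Iic.2 h))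
    (hS.inter_of_left _)

lemma rankIn_lt_rankIn_iff (hS : S.Finite) (hb : b ∈ S) :
    rankIn S a < rankIn S b ↔ a < b := by
  refine ⟨fun h => lt_of_not_ge fun hba => (rankIn_mono hS hba).not_gt h, fun h => ?_⟩
  refine Set.ncard_lt_ncard ((Set.ssubset_iff_of_subset ?_).2 ?_) (hS.inter_of_left _)
  · exact Set.inter_subset_inter_right _ (Set.Iic_subset_Iic.2 h.le)
  · exact ⟨b, ⟨hb, le_rfl⟩, fun hb' => h.not_ge hb'.2⟩

lemma isDenseRanking_rankIn (hS : S.Finite) : IsDenseRanking S (rankIn S) := by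
  intro a ha
  have hrank : rankIn S a = (S ∩ Set.Iio a).ncard + 1 := by
    have ha' : a ∉ S ∩ Set.Iio a := fun h => lt_irrefl a h.2
    rw [rankIn, ← Set.Iio_insert, Set.inter_insert_of_mem ha,
      Set.ncard_insert_of_notMem ha' (hS.inter_of_left _)]
  refine ⟨by omega, fun h => ?_⟩
  obtain ⟨b, ⟨hb, hba⟩, hmax⟩ := Set.exists_max_image (S ∩ Set.Iio a) id
    (hS.inter_of_left _) (Set.nonempty_of_ncard_ne_zero (by omega))
  have hIic_b : S ∩ Set.Iic b = S ∩ Set.Iio a := by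
    ext c
    exact ⟨fun ⟨hc, hcb⟩ => ⟨hc, hcb.trans_lt hba⟩, fun hc => ⟨hc.1, hmax c hc⟩⟩
  exact ⟨b, hb, by rw [hrank, rankIn, hIic_b]⟩

end RankIn

lemma IsPartitionFn.finite_inShape {lam : ℕ → ℕ} (hlam : IsPartitionFn lam) :
    {x : ℕ × ℕ | InShape lam x}.Finite := by
  obtain ⟨hanti, N, hN⟩ := hlam
  refine ((Set.finite_Iio N).prod (Set.finite_Iio (lam 0))).subset
    fun x (hx : x.2 < lam x.1) => ?_
  have hrow : x.1 < N := by
    by_contra h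
    have := hN x.1 (by omega)
    omega
  exact ⟨hrow, lt_of_lt_of_le hx (hanti (Nat.zero_le _))⟩

namespace GenomicTableau

variable {lam : ℕ → ℕ} (T : GenomicTableau lam) {x y : ℕ × ℕ}

lemma entry_le_entry (hy : InShape lam y) (h₁ : x.1 ≤ y.1) (h₂ : x.2 ≤ y.2) :
    T.entry x ≤ T.entry y := by
  have hcorner : InShape lam (y.1, x.2) := lt_of_le_of_lt h₂ hy
  calc T.entry x ≤ T.entry (y.1, x.2) := by
        rcases h₁.eq_or_lt with h | h
        · rw [← h]
        · exact (T.col_strict x.1 y.1 x.2 h hcorner).le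
    _ ≤ T.entry y := T.row_weak y.1 x.2 y.2 h₂ hy

lemma entry_lt_entry (hy : InShape lam y) (h₁ : x.1 < y.1) (h₂ : x.2 ≤ y.2) :
    T.entry x < T.entry y :=
  calc T.entry x < T.entry (y.1, x.2) := T.col_strict x.1 y.1 x.2 h₁ (lt_of_le_of_lt h₂ hy)
    _ ≤ T.entry y := T.row_weak y.1 x.2 y.2 h₂ hy

lemma eq_of_entry_eq_of_col_eq (hx : InShape lam x) (hy : InShape lam y)
    (he : T.entry x = T.entry y) (hc : x.2 = y.2) : x = y := by
  rcases lt_trichotomy x.1 y.1 with h | h | h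
  · exact absurd he (T.entry_lt_entry hy h hc.le).ne
  · exact Prod.ext h hc
  · exact absurd he (T.entry_lt_entry hx h hc.ge).ne'

lemma row_lt_of_entry_lt_of_col_le (hx : InShape lam x) (he : T.entry x < T.entry y)
    (hc : y.2 ≤ x.2) : x.1 < y.1 :=
  lt_of_not_ge fun h => (T.entry_le_entry hx h hc).not_gt he

lemma col_lt_of_row_lt_of_entry_eq (hy : InShape lam y) (he : T.entry x = T.entry y)
    (hr : x.1 < y.1) : y.2 < x.2 :=
  lt_of_not_ge fun h => (T.entry_lt_entry hy hr h).ne he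

end GenomicTableau

section Genes

variable {lam : ℕ → ℕ} {T : GenomicTableau lam} {x y : ℕ × ℕ}

lemma leadCol_le (h : T.sameGene x y) : leadCol T x ≤ y.2 := Nat.sInf_le ⟨y, h, rfl⟩

lemma exists_sameGene_col_eq_leadCol (hx : InShape lam x) :
    ∃ l, T.sameGene x l ∧ l.2 = leadCol T x :=
  Nat.sInf_mem (s := {c | ∃ y, T.sameGene x y ∧ y.2 = c})
    ⟨x.2, x, T.sameGene_refl x hx, rfl⟩

lemma leadCol_eq_of_sameGene (h : T.sameGene x y) : leadCol T x = leadCol T y := by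
  unfold leadCol
  congr 1
  ext c
  exact ⟨fun ⟨z, hz, hc⟩ => ⟨z, T.sameGene_trans _ _ _ (T.sameGene_symm _ _ h) hz, hc⟩,
    fun ⟨z, hz, hc⟩ => ⟨z, T.sameGene_trans _ _ _ h hz, hc⟩⟩

lemma leadCol_of_isGeneLeader (h : IsGeneLeader T y) : leadCol T y = y.2 := by
  obtain ⟨l, hl, hlc⟩ := exists_sameGene_col_eq_leadCol (T := T) h.1
  exact le_antisymm (leadCol_le (T.sameGene_refl y h.1)) (hlc ▸ h.2 l hl)

lemma exists_isGeneLeader_sameGene (hx : InShape lam x) :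
    ∃ l, IsGeneLeader T l ∧ T.sameGene x l := by
  obtain ⟨l, hl, hlc⟩ := exists_sameGene_col_eq_leadCol (T := T) hx
  refine ⟨l, ⟨(T.sameGene_mem _ _ hl).2, fun z hz => ?_⟩, hl⟩
  exact hlc ▸ leadCol_le (T.sameGene_trans _ _ _ hl hz)

lemma sameGene_of_leadCol_le_col (hx : InShape lam x) (hy : InShape lam y)
    (he : T.entry y = T.entry x) (h₁ : leadCol T x ≤ y.2) (h₂ : y.2 ≤ x.2) :
    T.sameGene x y := by
  obtain ⟨l, hl, hlc⟩ := exists_sameGene_col_eq_leadCol (T := T) hx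
  have hle : T.entry l = T.entry x := (T.sameGene_entry _ _ hl).symm
  rcases h₂.eq_or_lt with h₂ | h₂
  · rw [T.eq_of_entry_eq_of_col_eq hy hx he h₂]
    exact T.sameGene_refl x hx
  rcases h₁.eq_or_lt with h₁ | h₁
  · rwa [T.eq_of_entry_eq_of_col_eq hy (T.sameGene_mem _ _ hl).2 (he.trans hle.symm)
      (h₁.symm.trans hlc.symm)]
  · exact T.sameGene_trans _ _ _ hl (T.sameGene_interval l y x (T.sameGene_symm _ _ hl) hy
      (he.trans hle.symm) (hlc ▸ h₁) h₂)

lemma col_lt_of_leadCol_lt (hx : InShape lam x) (hy : InShape lam y)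
    (he : T.entry x = T.entry y) (h : leadCol T x < leadCol T y) : x.2 < y.2 := by
  by_contra hyx
  have hxy := sameGene_of_leadCol_le_col hx hy he.symm (h.le.trans (leadCol_le
    (T.sameGene_refl y hy))) (not_lt.1 hyx)
  exact h.ne (leadCol_eq_of_sameGene hxy)

end Genes

section GeneKey

variable {lam : ℕ → ℕ} (T : GenomicTableau lam)

/-- Genes are ordered by entry, then by leftmost column; `kStd` numbers them in this order. -/
noncomputable def geneKey (x : ℕ × ℕ) : ℕ ×ₗ ℕ := toLex (T.entry x, leadCol T x)

noncomputable def geneKeys : Set (ℕ ×ₗ ℕ) := geneKey T '' {x | InShape lam x}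

variable {T} {x y : ℕ × ℕ}

lemma geneKey_lt_geneKey_iff : geneKey T x < geneKey T y ↔
    T.entry x < T.entry y ∨ T.entry x = T.entry y ∧ leadCol T x < leadCol T y :=
  Prod.Lex.toLex_lt_toLex

lemma geneKey_eq_geneKey_iff (hx : InShape lam x) (hy : InShape lam y) :
    geneKey T x = geneKey T y ↔ T.sameGene x y := by
  refine ⟨fun h => ?_, fun h => ?_⟩
  · simp only [geneKey, EmbeddingLike.apply_eq_iff_eq, Prod.mk.injEq] at h
    obtain ⟨lx, hlx, hlxc⟩ := exists_sameGene_col_eq_leadCol (T := T) hx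
    obtain ⟨ly, hly, hlyc⟩ := exists_sameGene_col_eq_leadCol (T := T) hy
    have hl : lx = ly := T.eq_of_entry_eq_of_col_eq (T.sameGene_mem _ _ hlx).2
      (T.sameGene_mem _ _ hly).2
      (by rw [← T.sameGene_entry _ _ hlx, ← T.sameGene_entry _ _ hly, h.1])
      (by rw [hlxc, hlyc, h.2])
    exact T.sameGene_trans _ _ _ hlx (hl ▸ T.sameGene_symm _ _ hly)
  · rw [geneKey, geneKey, T.sameGene_entry _ _ h, leadCol_eq_of_sameGene h]

lemma finite_geneKeys (hlam : IsPartitionFn lam) : (geneKeys T).Finite :=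
  hlam.finite_inShape.image _

lemma kStd_eq_rankIn_geneKey (hx : InShape lam x) :
    kStd T x = rankIn (geneKeys T) (geneKey T x) := by
  have hleaders : {y | IsGeneLeader T y ∧ (T.entry y < T.entry x ∨
      (T.entry y = T.entry x ∧ y.2 ≤ leadCol T x))} =
      {y | IsGeneLeader T y} ∩ geneKey T ⁻¹' Set.Iic (geneKey T x) := by
    ext y
    simp only [Set.mem_ofPred_eq, Set.mem_inter_iff, Set.mem_preimage, Set.mem_Iic, geneKey,
      Prod.Lex.toLex_le_toLex]
    exact ⟨fun ⟨hy, h⟩ => ⟨hy, leadCol_of_isGeneLeader hy ▸ h⟩,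
      fun ⟨hy, h⟩ => ⟨hy, leadCol_of_isGeneLeader hy ▸ h⟩⟩
  have hinj : Set.InjOn (geneKey T) {y | IsGeneLeader T y} := fun y hy z hz h => by
    simp only [geneKey, leadCol_of_isGeneLeader hy, leadCol_of_isGeneLeader hz,
      EmbeddingLike.apply_eq_iff_eq, Prod.mk.injEq] at h
    exact T.eq_of_entry_eq_of_col_eq hy.1 hz.1 h.1 h.2
  have himage : geneKey T '' {y | IsGeneLeader T y} = geneKeys T := by
    refine (Set.image_mono fun y hy => hy.1).antisymm ?_
    rintro _ ⟨z, hz, rfl⟩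
    obtain ⟨l, hl, hzl⟩ := exists_isGeneLeader_sameGene (T := T) hz
    exact ⟨l, hl, ((geneKey_eq_geneKey_iff hz hl.1).2 hzl).symm⟩
  rw [kStd, if_pos hx, hleaders, ← (hinj.mono Set.inter_subset_left).ncard_image,
    Set.image_inter_preimage, himage, rankIn]

variable (hlam : IsPartitionFn lam)
include hlam

lemma kStd_lt_kStd_iff (hx : InShape lam x) (hy : InShape lam y) :
    kStd T x < kStd T y ↔ geneKey T x < geneKey T y := by
  rw [kStd_eq_rankIn_geneKey hx, kStd_eq_rankIn_geneKey hy]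
  exact rankIn_lt_rankIn_iff (finite_geneKeys hlam) ⟨y, hy, rfl⟩

lemma kStd_eq_kStd_iff (hx : InShape lam x) (hy : InShape lam y) :
    kStd T x = kStd T y ↔ T.sameGene x y := by
  rw [← geneKey_eq_geneKey_iff hx hy]
  refine ⟨fun h => ?_, fun h => ?_⟩
  · by_contra hne
    rcases lt_or_gt_of_ne hne with hlt | hlt
    · exact ((kStd_lt_kStd_iff hlam hx hy).2 hlt).ne h
    · exact ((kStd_lt_kStd_iff hlam hy hx).2 hlt).ne' h
  · rw [kStd_eq_rankIn_geneKey hx, kStd_eq_rankIn_geneKey hy, h]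

lemma isDenseRanking_kStd : IsDenseRanking {x | InShape lam x} (kStd T) := by
  intro x hx
  obtain ⟨hpos, hpred⟩ :=
    isDenseRanking_rankIn (finite_geneKeys (T := T) hlam) _ ⟨x, hx, rfl⟩
  rw [kStd_eq_rankIn_geneKey hx]
  refine ⟨hpos, fun h => ?_⟩
  obtain ⟨_, ⟨y, hy, rfl⟩, hyx⟩ := hpred h
  exact ⟨y, hy, by rw [kStd_eq_rankIn_geneKey hy, hyx]⟩

lemma entry_eq_of_kStd_eq (hx : InShape lam x) (hy : InShape lam y)
    (h : kStd T x = kStd T y) : T.entry x = T.entry y :=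
  T.sameGene_entry _ _ ((kStd_eq_kStd_iff hlam hx hy).1 h)

lemma kStd_lt_kStd_of_entry_lt (hx : InShape lam x) (hy : InShape lam y)
    (h : T.entry x < T.entry y) : kStd T x < kStd T y :=
  (kStd_lt_kStd_iff hlam hx hy).2 (geneKey_lt_geneKey_iff.2 (Or.inl h))

lemma entry_le_entry_of_kStd_lt (hx : InShape lam x) (hy : InShape lam y)
    (h : kStd T x < kStd T y) : T.entry x ≤ T.entry y := by
  rcases geneKey_lt_geneKey_iff.1 ((kStd_lt_kStd_iff hlam hx hy).1 h) with h | h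
  exacts [h.le, h.1.le]

lemma col_lt_of_kStd_lt (hx : InShape lam x) (hy : InShape lam y)
    (he : T.entry x = T.entry y) (h : kStd T x < kStd T y) : x.2 < y.2 := by
  rcases geneKey_lt_geneKey_iff.1 ((kStd_lt_kStd_iff hlam hx hy).1 h) with h | h
  exacts [absurd he h.ne, col_lt_of_leadCol_lt hx hy he h.2]

lemma kStd_lt_kStd_of_col_lt {r c₁ c₂ : ℕ} (hc : c₁ < c₂) (hy : InShape lam (r, c₂)) :
    kStd T (r, c₁) < kStd T (r, c₂) := by
  have hx : InShape lam (r, c₁) := hc.trans hy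
  rw [kStd_lt_kStd_iff hlam hx hy, geneKey_lt_geneKey_iff]
  refine (T.row_weak r c₁ c₂ hc.le hy).lt_or_eq.imp id fun he => ⟨he, ?_⟩
  refine (leadCol_le (T.sameGene_refl _ hx)).trans_lt (lt_of_not_ge fun h => hc.ne ?_)
  have := T.sameGene_row _ _ (sameGene_of_leadCol_le_col hy hx he h hc.le) rfl
  exact (congrArg Prod.snd this).symm

end GeneKey

namespace IncreasingTableau

variable {lam : ℕ → ℕ} (U : IncreasingTableau lam) {x y : ℕ × ℕ}

lemma entry_lt_entry (hy : InShape lam y) (h₁ : x.1 ≤ y.1) (h₂ : x.2 ≤ y.2)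
    (hne : x ≠ y) : U.entry x < U.entry y := by
  rcases h₁.lt_or_eq with h₁ | h₁
  · calc U.entry x < U.entry (y.1, x.2) := U.col_strict _ _ _ h₁ (h₂.trans_lt hy)
      _ ≤ U.entry y := by
        rcases h₂.eq_or_lt with h₂ | h₂
        · rw [show (y.1, x.2) = y from Prod.ext rfl h₂]
        · exact (U.row_strict _ _ _ h₂ hy).le
  · have := U.row_strict y.1 x.2 y.2 (h₂.lt_of_ne fun h => hne (Prod.ext h₁ h)) hy
    rwa [show (y.1, x.2) = x from Prod.ext h₁.symm rfl] at this

lemma entry_le_entry (hy : InShape lam y) (h₁ : x.1 ≤ y.1) (h₂ : x.2 ≤ y.2) :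
    U.entry x ≤ U.entry y := by
  rcases eq_or_ne x y with rfl | hne
  exacts [le_rfl, (U.entry_lt_entry hy h₁ h₂ hne).le]

lemma entry_add_two_le (hy : InShape lam y) (h₁ : x.1 < y.1) (h₂ : x.2 < y.2) :
    U.entry x + 2 ≤ U.entry y := by
  obtain ⟨a, b⟩ := x
  obtain ⟨c, d⟩ := y
  have := U.col_strict a c b h₁ (h₂.trans hy)
  have := U.row_strict c b d h₂ hy
  omega

lemma gapless_iff_isDenseRanking (hlam : IsPartitionFn lam) :
    Gapless U ↔ IsDenseRanking {x | InShape lam x} U.entry := by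
  have hvalues : {n | ∃ x, InShape lam x ∧ U.entry x = n} = U.entry '' {x | InShape lam x} :=
    rfl
  have hfin := hlam.finite_inShape.image U.entry
  refine ⟨fun hgl x hx => ⟨U.entry_pos x hx, fun h => ?_⟩, fun hU i hi hmax => ?_⟩
  · obtain ⟨y, hy, hyx⟩ := hgl (U.entry x - 1) (by omega)
      ((Nat.sub_le _ 1).trans (le_csSup hfin.bddAbove ⟨x, hx, rfl⟩))
    exact ⟨y, hy, by omega⟩
  · rw [maxEntryInc, hvalues] at hmax
    have hne : (U.entry '' {x | InShape lam x}).Nonempty :=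
      Set.nonempty_iff_ne_empty.2 fun h => by
        rw [h, csSup_empty, Nat.bot_eq_zero] at hmax
        omega
    obtain ⟨x, hx, hxmax⟩ := Nat.sSup_mem hne hfin.bddAbove
    exact hU.exists_eq hx hi (hxmax ▸ hmax)

lemma exists_isDescent_of_row_lt (hU : IsDenseRanking {x | InShape lam x} U.entry)
    {p q : ℕ × ℕ} (hp : InShape lam p) (hq : InShape lam q) (hpq : U.entry p < U.entry q)
    (hr : p.1 < q.1) : ∃ j, U.entry p ≤ j ∧ j < U.entry q ∧ IsDescent U j := by
  induction hn : U.entry q using Nat.strong_induction_on generalizing q with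
  | _ n ih =>
    by_cases hd : IsDescent U (n - 1)
    · exact ⟨n - 1, by omega, by omega, hd⟩
    have hlt : U.entry p < n - 1 :=
      lt_of_le_of_ne (by omega) fun h => hd ⟨p, q, hp, hq, h, by omega, hr⟩
    obtain ⟨s, hs, hsn⟩ := (hU q hq).2 (by omega)
    have hqs : q.1 ≤ s.1 := not_lt.1 fun h => hd ⟨s, q, hs, hq, by omega, by omega, h⟩
    obtain ⟨j, hj⟩ := ih (U.entry s) (by omega) hs (by omega) (hr.trans_le hqs) rfl
    exact ⟨j, hj.1, by omega, hj.2.2⟩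

/-- The entry `v` goes to the `descentBlock U v`-th block of `1 2 ⋯ n` cut after each descent
of `U`. -/
noncomputable def descentBlock (v : ℕ) : ℕ := 1 + ((Finset.Ico 1 v).filter (IsDescent U)).card

variable {U}

lemma descentBlock_mono : Monotone U.descentBlock := fun _ _ h =>
  Nat.add_le_add_left (Finset.card_le_card
    (Finset.filter_subset_filter _ (Finset.Ico_subset_Ico le_rfl h))) 1

lemma descentBlock_of_le_one {v : ℕ} (hv : v ≤ 1) : U.descentBlock v = 1 := by
  simp [descentBlock, Finset.Ico_eq_empty_of_le hv]

lemma descentBlock_succ {v : ℕ} (hv : 1 ≤ v) :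
    U.descentBlock (v + 1) = U.descentBlock v + if IsDescent U v then 1 else 0 := by
  rw [descentBlock, descentBlock, Nat.Ico_succ_right_eq_insert_Ico hv, Finset.filter_insert]
  split_ifs
  · rw [Finset.card_insert_of_notMem (by simp)]
    omega
  · omega

lemma descentBlock_lt_of_isDescent {u v j : ℕ} (hu : 1 ≤ u) (huj : u ≤ j) (hjv : j < v)
    (hd : IsDescent U j) : U.descentBlock u < U.descentBlock v :=
  calc U.descentBlock u ≤ U.descentBlock j := descentBlock_mono huj
    _ < U.descentBlock (j + 1) := by rw [descentBlock_succ (hu.trans huj), if_pos hd]; omega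
    _ ≤ U.descentBlock v := descentBlock_mono hjv

variable (hU : IsDenseRanking {x | InShape lam x} U.entry)
include hU

lemma descentBlock_lt_of_row_lt (hx : InShape lam x) (hy : InShape lam y)
    (hxy : U.entry x < U.entry y) (hr : x.1 < y.1) :
    U.descentBlock (U.entry x) < U.descentBlock (U.entry y) := by
  obtain ⟨j, hxj, hjy, hd⟩ := U.exists_isDescent_of_row_lt hU hx hy hxy hr
  exact descentBlock_lt_of_isDescent (U.entry_pos x hx) hxj hjy hd

lemma col_lt_of_descentBlock_eq (hx : InShape lam x) (hy : InShape lam y)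
    (hxy : U.entry x < U.entry y) (hb : U.descentBlock (U.entry x) = U.descentBlock (U.entry y)) :
    x.2 < y.2 := by
  have hr : y.1 ≤ x.1 := not_lt.1 fun h => (descentBlock_lt_of_row_lt hU hx hy hxy h).ne hb
  exact lt_of_not_ge fun h => (U.entry_le_entry hx hr h).not_gt hxy

end IncreasingTableau

section Standardization

variable {lam : ℕ → ℕ} (hlam : IsPartitionFn lam)

noncomputable def GenomicTableau.kStdTableau (T : GenomicTableau lam) :
    IncreasingTableau lam where
  entry := kStd T
  entry_pos x hx := (isDenseRanking_kStd hlam x hx).1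
  entry_zero _ hx := if_neg hx
  row_strict _ _ _ hc hy := kStd_lt_kStd_of_col_lt hlam hc hy
  col_strict r₁ r₂ c hr hy :=
    kStd_lt_kStd_of_entry_lt hlam (hy.trans_le (hlam.1 hr.le)) hy (T.col_strict r₁ r₂ c hr hy)

lemma GenomicTableau.gapless_kStdTableau (T : GenomicTableau lam) :
    Gapless (T.kStdTableau hlam) :=
  ((T.kStdTableau hlam).gapless_iff_isDenseRanking hlam).2 (isDenseRanking_kStd hlam)

/-- The inverse of K-standardization. -/
noncomputable def IncreasingTableau.toGenomic (U : IncreasingTableau lam) (hgl : Gapless U) :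
    GenomicTableau lam :=
  have hU := (U.gapless_iff_isDenseRanking hlam).1 hgl
  { entry := fun x => if InShape lam x then U.descentBlock (U.entry x) else 0
    sameGene := fun x y => InShape lam x ∧ InShape lam y ∧ U.entry x = U.entry y
    entry_pos := fun x hx => by
      rw [if_pos hx]
      exact Nat.le_add_right 1 _
    entry_zero := fun x hx => if_neg hx
    row_weak := fun r c₁ c₂ hc hy => by
      rw [if_pos (show InShape lam (r, c₁) from hc.trans_lt hy), if_pos hy]
      exact IncreasingTableau.descentBlock_mono (U.entry_le_entry hy le_rfl hc)
    col_strict := fun r₁ r₂ c hr hy => by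
      have hx : InShape lam (r₁, c) := lt_of_lt_of_le hy (hlam.1 hr.le)
      rw [if_pos hx, if_pos hy]
      exact IncreasingTableau.descentBlock_lt_of_row_lt hU hx hy (U.col_strict r₁ r₂ c hr hy) hr
    sameGene_mem := fun _ _ h => ⟨h.1, h.2.1⟩
    sameGene_refl := fun _ hx => ⟨hx, hx, rfl⟩
    sameGene_symm := fun _ _ h => ⟨h.2.1, h.1, h.2.2.symm⟩
    sameGene_trans := fun _ _ _ h h' => ⟨h.1, h'.2.1, h.2.2.trans h'.2.2⟩
    sameGene_entry := fun _ _ h => by rw [if_pos h.1, if_pos h.2.1, h.2.2]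
    sameGene_interval := fun x y z ⟨hx, hz, hxz⟩ hy hb h₁ h₂ => by
      rw [if_pos hy, if_pos hx] at hb
      refine ⟨hx, hy, (lt_trichotomy (U.entry x) (U.entry y)).elim (fun hlt => ?_)
        fun h => h.elim id fun hgt => ?_⟩
      · exact absurd (IncreasingTableau.col_lt_of_descentBlock_eq hU hz hy (hxz ▸ hlt)
          (hxz ▸ hb.symm)) h₂.not_gt
      · exact absurd (IncreasingTableau.col_lt_of_descentBlock_eq hU hy hx hgt hb) h₁.not_gt
    sameGene_row := fun x y ⟨hx, hy, he⟩ hr => by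
      by_contra hne
      rcases le_total x.2 y.2 with hc | hc
      · exact (U.entry_lt_entry hy hr.le hc hne).ne he
      · exact (U.entry_lt_entry hx hr.ge hc (Ne.symm hne)).ne' he }

variable {U : IncreasingTableau lam} (hgl : Gapless U) {x y : ℕ × ℕ}

lemma IncreasingTableau.toGenomic_entry (hx : InShape lam x) :
    (U.toGenomic hlam hgl).entry x = U.descentBlock (U.entry x) :=
  if_pos hx

lemma IncreasingTableau.toGenomic_sameGene :
    (U.toGenomic hlam hgl).sameGene x y ↔
      InShape lam x ∧ InShape lam y ∧ U.entry x = U.entry y :=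
  Iff.rfl

lemma IncreasingTableau.isQY_toGenomic : IsQY (U.toGenomic hlam hgl) := by
  rintro i hi ⟨w, hw, hwi⟩
  rw [U.toGenomic_entry hlam hgl hw] at hwi
  have hex : ∃ v, U.descentBlock v = i := ⟨_, hwi⟩
  have hv : U.descentBlock (Nat.find hex) = i := Nat.find_spec hex
  have hv₂ : 2 ≤ Nat.find hex := not_lt.1 fun h => by
    rw [IncreasingTableau.descentBlock_of_le_one (by omega)] at hv
    omega
  have hstep := IncreasingTableau.descentBlock_succ (U := U) (v := Nat.find hex - 1) (by omega)
  rw [Nat.sub_add_cancel (by omega : 1 ≤ Nat.find hex)] at hstep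
  have hd : IsDescent U (Nat.find hex - 1) := by
    by_contra hd
    rw [if_neg hd, add_zero] at hstep
    exact Nat.find_min hex (by omega : Nat.find hex - 1 < Nat.find hex) (hstep ▸ hv)
  obtain ⟨p, q, hp, hq, hpv, hqv, hpq⟩ := hd
  rw [if_pos ⟨p, q, hp, hq, hpv, hqv, hpq⟩] at hstep
  refine ⟨q, p, hq, hp, ?_, ?_, not_lt.1 fun hc => ?_⟩
  · rw [U.toGenomic_entry hlam hgl hq, hqv, Nat.sub_add_cancel (by omega), hv]
  · rw [U.toGenomic_entry hlam hgl hp, hpv]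
    omega
  · have := U.entry_add_two_le hq hpq hc
    omega

lemma IncreasingTableau.geneKey_toGenomic_lt (hx : InShape lam x) (hy : InShape lam y)
    (hxy : U.entry x < U.entry y) :
    geneKey (U.toGenomic hlam hgl) x < geneKey (U.toGenomic hlam hgl) y := by
  rw [geneKey_lt_geneKey_iff, U.toGenomic_entry hlam hgl hx, U.toGenomic_entry hlam hgl hy]
  refine (IncreasingTableau.descentBlock_mono hxy.le).lt_or_eq.imp id fun hb => ⟨hb, ?_⟩
  obtain ⟨lx, ⟨-, hlx, hxlx⟩, hlxc⟩ :=
    exists_sameGene_col_eq_leadCol (T := U.toGenomic hlam hgl) hx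
  obtain ⟨ly, ⟨-, hly, hyly⟩, hlyc⟩ :=
    exists_sameGene_col_eq_leadCol (T := U.toGenomic hlam hgl) hy
  rw [← hlxc, ← hlyc]
  exact IncreasingTableau.col_lt_of_descentBlock_eq ((U.gapless_iff_isDenseRanking hlam).1 hgl)
    hlx hly (hxlx ▸ hyly ▸ hxy) (hxlx ▸ hyly ▸ hb)

lemma IncreasingTableau.kStd_toGenomic : kStd (U.toGenomic hlam hgl) = U.entry := by
  funext x
  by_cases hx : InShape lam x
  swap
  · rw [kStd, if_neg hx, U.entry_zero x hx]
  refine (isDenseRanking_kStd hlam).eqOn ((U.gapless_iff_isDenseRanking hlam).1 hgl)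
    (fun y hy z hz => ?_) hx
  rw [kStd_lt_kStd_iff hlam hy hz]
  rcases lt_trichotomy (U.entry y) (U.entry z) with h | h | h
  · exact iff_of_true (U.geneKey_toGenomic_lt hlam hgl hy hz h) h
  · rw [(geneKey_eq_geneKey_iff hy hz).2 ((U.toGenomic_sameGene hlam hgl).2 ⟨hy, hz, h⟩)]
    exact iff_of_false (lt_irrefl _) h.not_lt
  · exact iff_of_false (U.geneKey_toGenomic_lt hlam hgl hz hy h).not_gt h.not_gt

end Standardization

section QuasiYamanouchi

variable {lam : ℕ → ℕ} (hlam : IsPartitionFn lam) {T : GenomicTableau lam} {x y : ℕ × ℕ}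
include hlam

lemma not_isDescent_kStd_of_entry_eq (hx : InShape lam x) (hy : InShape lam y)
    (hxy : kStd T y = kStd T x + 1) (he : T.entry y = T.entry x) :
    ¬ IsDescent (T.kStdTableau hlam) (kStd T x) := by
  rintro ⟨p, q, hp, hq, hpx, hqy, hpq⟩
  have hpx : kStd T p = kStd T x := hpx
  have hqy : kStd T q = kStd T y := hqy.trans hxy.symm
  have hepq : T.entry p = T.entry q := by
    rw [entry_eq_of_kStd_eq hlam hp hx hpx, entry_eq_of_kStd_eq hlam hq hy hqy, he]
  exact (T.col_lt_of_row_lt_of_entry_eq hq hepq hpq).not_gt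
    (col_lt_of_kStd_lt hlam hp hq hepq (by omega))

variable (hT : IsQY T)
include hT

lemma entry_eq_one_of_kStd_eq_one (hx : InShape lam x) (h : kStd T x = 1) : T.entry x = 1 := by
  by_contra hne
  have := T.entry_pos x hx
  obtain ⟨-, b, -, hb, -, hbe, -⟩ := hT (T.entry x) (by omega) ⟨x, hx, rfl⟩
  have := kStd_lt_kStd_of_entry_lt (T := T) hlam hb hx (by omega)
  have := (isDenseRanking_kStd (T := T) hlam b hb).1
  omega

lemma entry_le_entry_add_one_of_kStd_eq (hx : InShape lam x) (hy : InShape lam y)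
    (hxy : kStd T y = kStd T x + 1) : T.entry y ≤ T.entry x + 1 := by
  by_contra hlt
  obtain ⟨-, b, -, hb, -, hbe, -⟩ := hT (T.entry y) (by omega) ⟨y, hy, rfl⟩
  have := kStd_lt_kStd_of_entry_lt (T := T) hlam hx hb (by omega)
  have := kStd_lt_kStd_of_entry_lt (T := T) hlam hb hy (by omega)
  omega

/-- The quasiYamanouchi condition gives an `i + 1` weakly west of an `i`. The last `i`-gene has
a box weakly east of that `i`, the first `(i + 1)`-gene a box weakly west of that `i + 1`, and
these two boxes witness the descent. -/
lemma isDescent_kStd_of_entry_eq_add_one (hx : InShape lam x) (hy : InShape lam y)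
    (hxy : kStd T y = kStd T x + 1) (he : T.entry y = T.entry x + 1) :
    IsDescent (T.kStdTableau hlam) (kStd T x) := by
  obtain ⟨a, b, ha, hb, hae, hbe, hab⟩ :=
    hT (T.entry y) (by have := T.entry_pos x hx; omega) ⟨y, hy, rfl⟩
  have hbx : T.entry b = T.entry x := by omega
  obtain ⟨p, hp, hpx, hbp⟩ : ∃ p, InShape lam p ∧ kStd T p = kStd T x ∧ b.2 ≤ p.2 := by
    have := kStd_lt_kStd_of_entry_lt (T := T) hlam hb hy (by omega)
    rcases (show kStd T b ≤ kStd T x by omega).lt_or_eq with h | h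
    exacts [⟨x, hx, rfl, (col_lt_of_kStd_lt hlam hb hx hbx h).le⟩, ⟨b, hb, h, le_rfl⟩]
  obtain ⟨q, hq, hqy, hqa⟩ : ∃ q, InShape lam q ∧ kStd T q = kStd T y ∧ q.2 ≤ a.2 := by
    have := kStd_lt_kStd_of_entry_lt (T := T) hlam hx ha (by omega)
    rcases (show kStd T y ≤ kStd T a by omega).lt_or_eq with h | h
    exacts [⟨y, hy, rfl, (col_lt_of_kStd_lt hlam hy ha hae.symm h).le⟩,
      ⟨a, ha, h.symm, le_rfl⟩]
  refine ⟨p, q, hp, hq, hpx, hqy.trans hxy, T.row_lt_of_entry_lt_of_col_le hp ?_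
    (hqa.trans (hab.trans hbp))⟩
  rw [entry_eq_of_kStd_eq hlam hp hx hpx, entry_eq_of_kStd_eq hlam hq hy hqy]
  omega

lemma entry_eq_entry_add_ite_isDescent (hx : InShape lam x) (hy : InShape lam y)
    (hxy : kStd T y = kStd T x + 1) :
    T.entry y = T.entry x + if IsDescent (T.kStdTableau hlam) (kStd T x) then 1 else 0 := by
  have := entry_le_entry_of_kStd_lt (T := T) hlam hx hy (by omega)
  have := entry_le_entry_add_one_of_kStd_eq hlam hT hx hy hxy
  rcases (show T.entry y = T.entry x ∨ T.entry y = T.entry x + 1 by omega) with he | he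
  · rw [if_neg (not_isDescent_kStd_of_entry_eq hlam hx hy hxy he), he, add_zero]
  · rw [if_pos (isDescent_kStd_of_entry_eq_add_one hlam hT hx hy hxy he), he]

lemma entry_eq_descentBlock_kStd (hx : InShape lam x) :
    T.entry x = (T.kStdTableau hlam).descentBlock (kStd T x) := by
  induction hn : kStd T x using Nat.strong_induction_on generalizing x with
  | _ n ih =>
    obtain ⟨hpos, hpred⟩ := isDenseRanking_kStd hlam x hx
    rcases hpos.eq_or_lt with h | h
    · rw [entry_eq_one_of_kStd_eq_one hlam hT hx h.symm,
        IncreasingTableau.descentBlock_of_le_one (by omega)]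
    obtain ⟨y, hy, hyx⟩ := hpred h
    rw [entry_eq_entry_add_ite_isDescent hlam hT hy hx hyx.symm, ih _ (by omega) hy rfl,
      ← hn, ← hyx, IncreasingTableau.descentBlock_succ (isDenseRanking_kStd hlam y hy).1]

lemma IncreasingTableau.toGenomic_eq_of_isQY {U : IncreasingTableau lam} (hgl : Gapless U)
    (hU : U.entry = kStd T) : U.toGenomic hlam hgl = T := by
  obtain rfl : U = T.kStdTableau hlam := IncreasingTableau.ext hU
  refine GenomicTableau.ext (funext fun x => ?_) (funext fun x => funext fun y => propext ?_)
  · by_cases hx : InShape lam x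
    · rw [IncreasingTableau.toGenomic_entry hlam hgl hx, entry_eq_descentBlock_kStd hlam hT hx]
      rfl
    · rw [GenomicTableau.entry_zero _ x hx, T.entry_zero x hx]
  · rw [IncreasingTableau.toGenomic_sameGene]
    refine ⟨fun ⟨hx, hy, h⟩ => (kStd_eq_kStd_iff hlam hx hy).1 h, fun h => ?_⟩
    obtain ⟨hx, hy⟩ := T.sameGene_mem _ _ h
    exact ⟨hx, hy, (kStd_eq_kStd_iff hlam hx hy).2 h⟩

end QuasiYamanouchi

/-- **Proposition.** For any partition `λ`, the K-standardization map `Φ` restricts to a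
bijection from the set `QYGen(λ)` of quasiYamanouchi genomic tableaux of shape `λ` onto the
set `Inc_gl(λ)` of gapless increasing tableaux of shape `λ` (identified here with their
entry functions). -/
theorem kStd_bijOn_qy_gaplessInc (lam : ℕ → ℕ) (hlam : IsPartitionFn lam) :
    Set.BijOn (fun T : GenomicTableau lam => kStd T)
      {T : GenomicTableau lam | IsQY T}
      {f : ℕ × ℕ → ℕ | ∃ T : IncreasingTableau lam, Gapless T ∧ T.entry = f} := by
  refine ⟨fun T _ => ⟨T.kStdTableau hlam, T.gapless_kStdTableau hlam, rfl⟩,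
    fun T hT T' hT' h => ?_, ?_⟩
  · have hgl := T'.gapless_kStdTableau hlam
    exact (IncreasingTableau.toGenomic_eq_of_isQY hlam hT hgl h.symm).symm.trans
      (IncreasingTableau.toGenomic_eq_of_isQY hlam hT' hgl rfl)
  · rintro _ ⟨U, hgl, rfl⟩
    exact ⟨U.toGenomic hlam hgl, U.isQY_toGenomic hlam hgl, U.kStd_toGenomic hlam hgl⟩
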